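/- Let G be a symmetric n×n matrix over the ring ℤ₂ of 2-adic integers. Then there exists U ∈ GLₙ(ℤ₂) such that UᵀGU is block diagonal with each diagonal block of size 1 or 2. Moreover, if there exists x ∈ ℤ₂ⁿ such that xᵀGx is a unit in ℤ₂, then U can be chosen so that in addition every diagonal block of size 2 of UᵀGU has all its entries in 2ℤ₂. -/

import Mathlib

/-!
Over a local ring, a symmetric matrix with a unit entry splits off a block of size 1 or 2 with
unit determinant: a unit diagonal entry if there is one, and otherwise the `2 × 2` principal
block through an off-diagonal unit, whose determinant is a non-unit minus a unit square. The
Schur complement of that block is symmetric and smaller. Over a valuation domain (such as `ℤ₂`)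
every nonzero symmetric matrix is a scalar multiple of one with a unit entry, and induction gives
the first statement.

For the second, a unit value `xᵀ G x` becomes a unit diagonal entry `u` after a change of basis.
Split it off, with complement `S`. If `S` has a unit diagonal entry, we recurse; if all entries
of `S` lie in the maximal ideal, so do the blocks of any decomposition of `S`. Otherwise some
`S j l` with `j ≠ l` is a unit, and replacing `e j` by `e j + e₀` gives the pivot `u + S j j`,
whose complement has the unit diagonal entry `S l l - S j l ^ 2 / (u + S j j)`: again we recurse.
The maximal ideal of `ℤ₂` is `2ℤ₂`.
-/

open Matrix

theorem PreValuationRing.exists_forall_dvd {α R : Type*} [CommMonoid R] [PreValuationRing R]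
    [Finite α] [Nonempty α] (f : α → R) : ∃ a, ∀ b, f a ∣ f b := by
  cases nonempty_fintype α
  suffices ∀ s : Finset α, s.Nonempty → ∃ a ∈ s, ∀ b ∈ s, f a ∣ f b by
    obtain ⟨a, -, ha⟩ := this Finset.univ Finset.univ_nonempty
    exact ⟨a, fun b => ha b (Finset.mem_univ b)⟩
  intro s hs
  induction hs using Finset.Nonempty.cons_induction with
  | singleton a => exact ⟨a, by simp⟩
  | cons a s ha hs ih =>
    obtain ⟨b, hb, hbs⟩ := ih
    rcases ValuationRing.dvd_total (f a) (f b) with hab | hba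
    · refine ⟨a, Finset.mem_cons_self _ _, ?_⟩
      simp only [Finset.forall_mem_cons]
      exact ⟨dvd_rfl, fun c hc => hab.trans (hbs c hc)⟩
    · refine ⟨b, Finset.mem_cons_of_mem hb, ?_⟩
      simp only [Finset.forall_mem_cons]
      exact ⟨hba, hbs⟩

theorem IsLocalRing.isUnit_add_of_not_isUnit_of_isUnit {R : Type*} [CommRing R] [IsLocalRing R]
    {a b : R} (ha : ¬IsUnit a) (hb : IsUnit b) : IsUnit (a + b) := by
  by_contra h
  have := IsLocalRing.nonunits_add (mem_nonunits_iff.mpr ha)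
    (show -(a + b) ∈ nonunits R by rwa [mem_nonunits_iff, IsUnit.neg_iff])
  simp_all

namespace Matrix

variable {R : Type*} [CommRing R] {ι κ : Type}

/-- The blocks are the fibres of `fun x => (e x).1`. -/
def IsSmallBlockDiagonal (I : Ideal R) (M : Matrix ι ι R) : Prop :=
  ∃ (K : Type) (_ : Finite K) (sz : K → ℕ) (_ : ∀ k, sz k = 1 ∨ sz k = 2)
    (e : ι ≃ Σ k, Fin (sz k)),
    ∀ x y, ((e x).1 ≠ (e y).1 → M x y = 0) ∧ (sz (e x).1 = 2 → M x y ∈ I)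

namespace IsSmallBlockDiagonal

variable {I J : Ideal R} {M : Matrix ι ι R}

theorem of_diagonal [Finite ι] [DecidableEq ι] (I : Ideal R) (d : ι → R) :
    IsSmallBlockDiagonal I (diagonal d) :=
  ⟨ι, inferInstance, fun _ => 1, fun _ => Or.inl rfl, (Equiv.sigmaUnique ι fun _ => Fin 1).symm,
    fun x y => ⟨fun h => diagonal_apply_ne _ (by simpa using h), by simp⟩⟩

theorem of_fin {s : ℕ} (hs : s = 1 ∨ s = 2) {A : Matrix (Fin s) (Fin s) R}
    (hA : s = 2 → ∀ a b, A a b ∈ I) : IsSmallBlockDiagonal I A :=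
  ⟨Unit, inferInstance, fun _ => s, fun _ => hs, (Equiv.uniqueSigma fun _ : Unit => Fin s).symm,
    fun a b => ⟨fun h => (h rfl).elim, fun h => hA h a b⟩⟩

theorem submatrix (h : IsSmallBlockDiagonal I M) (f : κ ≃ ι) :
    IsSmallBlockDiagonal I (M.submatrix f f) := by
  obtain ⟨K, _, sz, hsz, e, he⟩ := h
  exact ⟨K, inferInstance, sz, hsz, f.trans e, fun x y => he (f x) (f y)⟩

theorem smul (h : IsSmallBlockDiagonal I M) (c : R) : IsSmallBlockDiagonal I (c • M) := by
  obtain ⟨K, _, sz, hsz, e, he⟩ := h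
  refine ⟨K, inferInstance, sz, hsz, e, fun x y => ⟨fun hxy => ?_, fun hx => ?_⟩⟩
  · simp [(he x y).1 hxy]
  · exact I.mul_mem_left c ((he x y).2 hx)

theorem of_forall_mem (h : IsSmallBlockDiagonal I M) (hM : ∀ x y, M x y ∈ J) :
    IsSmallBlockDiagonal J M := by
  obtain ⟨K, _, sz, hsz, e, he⟩ := h
  exact ⟨K, inferInstance, sz, hsz, e, fun x y => ⟨(he x y).1, fun _ => hM x y⟩⟩

theorem fromBlocks {A : Matrix ι ι R} {D : Matrix κ κ R} (hA : IsSmallBlockDiagonal I A)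
    (hD : IsSmallBlockDiagonal I D) : IsSmallBlockDiagonal I (fromBlocks A 0 0 D) := by
  obtain ⟨K, _, sz, hsz, e, he⟩ := hA
  obtain ⟨K', _, sz', hsz', e', he'⟩ := hD
  refine ⟨K ⊕ K', inferInstance, Sum.elim sz sz', Sum.rec hsz hsz',
    (Equiv.sumCongr e e').trans (Equiv.sumSigmaDistrib fun k => Fin (Sum.elim sz sz' k)).symm,
    ?_⟩
  rintro (x | x) (y | y)
  · simpa [Equiv.sumSigmaDistrib] using he x y
  · simp [Equiv.sumSigmaDistrib]
  · simp [Equiv.sumSigmaDistrib]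
  · simpa [Equiv.sumSigmaDistrib] using he' x y

theorem exists_fin [DecidableEq ι] (h : IsSmallBlockDiagonal I M) :
    ∃ (k : ℕ) (sz : Fin k → ℕ) (_ : ∀ i, sz i = 1 ∨ sz i = 2)
      (B : ∀ i, Matrix (Fin (sz i)) (Fin (sz i)) R) (e : ι ≃ Σ i, Fin (sz i)),
      M = (blockDiagonal' B).submatrix e e ∧ ∀ i, sz i = 2 → ∀ a b, B i a b ∈ I := by
  obtain ⟨K, _, sz, hsz, e, he⟩ := h
  let σ := (Finite.equivFin K).symm
  let e' := e.trans (Equiv.sigmaCongrLeft σ).symm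
  refine ⟨_, fun i => sz (σ i), fun i => hsz _,
    fun i => of fun a b => M (e'.symm ⟨i, a⟩) (e'.symm ⟨i, b⟩), e', ?_, fun i hi a b => ?_⟩
  · ext x y
    obtain ⟨⟨i, a⟩, rfl⟩ := e'.symm.surjective x
    obtain ⟨⟨j, b⟩, rfl⟩ := e'.symm.surjective y
    rw [submatrix_apply, Equiv.apply_symm_apply, Equiv.apply_symm_apply]
    by_cases hij : i = j
    · subst hij
      rw [blockDiagonal'_apply_eq, of_apply]
    · rw [blockDiagonal'_apply_ne _ _ _ hij]
      apply (he _ _).1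
      simpa [e'] using hij
  · simpa [e'] using (he _ _).2 (by simpa [e'] using hi)

end IsSmallBlockDiagonal

/-- The Gram matrix of the orthogonal complement of the basis vectors indexed by `v`. -/
noncomputable def schurCompl (M : Matrix ι ι R) {s : ℕ} (v : Fin s → ι) :
    Matrix ↥(Set.range v)ᶜ ↥(Set.range v)ᶜ R :=
  M.submatrix (↑) (↑) - M.submatrix (↑) v * (M.submatrix v v)⁻¹ * M.submatrix v (↑)

theorem IsSymm.schurCompl {M : Matrix ι ι R} (hM : M.IsSymm) {s : ℕ} (v : Fin s → ι) :
    (M.schurCompl v).IsSymm := by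
  rw [IsSymm, Matrix.schurCompl]
  simp [transpose_nonsing_inv, hM.eq, Matrix.mul_assoc]

theorem schurCompl_apply_of_fin_one (M : Matrix ι ι R) (v : Fin 1 → ι) (x y : ↥(Set.range v)ᶜ) :
    M.schurCompl v x y = M x y - M x (v 0) * Ring.inverse (M (v 0) (v 0)) * M (v 0) y := by
  simp [schurCompl, mul_apply, inv_subsingleton]

theorem IsSymm.transpose_mul_mul [Fintype ι] {M : Matrix ι ι R} (hM : M.IsSymm)
    (U : Matrix ι κ R) : (Uᵀ * M * U).IsSymm := by
  simp [IsSymm, hM.eq, Matrix.mul_assoc]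

theorem IsSymm.exists_isUnit_det_submatrix [IsLocalRing R] {M : Matrix ι ι R} (hM : M.IsSymm)
    {i j : ι} (hij : IsUnit (M i j)) :
    ∃ (s : ℕ) (v : Fin s → ι),
      (s = 1 ∨ s = 2) ∧ Function.Injective v ∧ IsUnit (M.submatrix v v).det := by
  by_cases hd : ∃ k, IsUnit (M k k)
  · obtain ⟨k, hk⟩ := hd
    exact ⟨1, fun _ => k, Or.inl rfl, Function.injective_of_subsingleton _, by simpa⟩
  push Not at hd
  have hne : i ≠ j := by rintro rfl; exact hd i hij
  refine ⟨2, ![i, j], Or.inr rfl, ?_, ?_⟩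
  · intro a b
    fin_cases a <;> fin_cases b <;> simp [hne, hne.symm]
  · rw [det_fin_two]
    simp only [submatrix_apply, Matrix.cons_val_zero, Matrix.cons_val_one, hM.apply i j]
    rw [sub_eq_add_neg]
    exact IsLocalRing.isUnit_add_of_not_isUnit_of_isUnit
      (fun h => hd i (isUnit_of_mul_isUnit_left h)) (hij.mul hij).neg

theorem IsSymm.exists_eq_smul [IsDomain R] [ValuationRing R] [Finite ι] {M : Matrix ι ι R}
    (hM : M.IsSymm) (h0 : M ≠ 0) :
    ∃ (g : R) (H : Matrix ι ι R), M = g • H ∧ H.IsSymm ∧ ∃ i j, H i j = 1 := by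
  obtain ⟨k, l, hkl⟩ : ∃ k l, M k l ≠ 0 := by
    by_contra! h
    exact h0 (Matrix.ext h)
  have : Nonempty (ι × ι) := ⟨(k, l)⟩
  obtain ⟨⟨i, j⟩, hdvd⟩ := PreValuationRing.exists_forall_dvd fun p : ι × ι => M p.1 p.2
  choose H hH using hdvd
  have hg : M i j ≠ 0 := fun h => hkl (by simpa [h] using hH (k, l))
  refine ⟨M i j, of fun k l => H (k, l), by ext k l; exact hH (k, l), ?_, i, j, ?_⟩
  · ext k l
    exact mul_left_cancel₀ hg (by rw [transpose_apply, of_apply, of_apply, ← hH, ← hH, hM.apply])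
  · exact mul_left_cancel₀ hg (by rw [of_apply, ← hH, mul_one])

section Congruence

variable [Fintype ι] [DecidableEq ι] [Fintype κ] [DecidableEq κ]

def IsSmallBlockDiagonalizable (I : Ideal R) (M : Matrix ι ι R) : Prop :=
  ∃ U : Matrix ι ι R, IsUnit U.det ∧ IsSmallBlockDiagonal I (Uᵀ * M * U)

variable {I J : Ideal R} {M : Matrix ι ι R}

theorem IsSmallBlockDiagonal.isSmallBlockDiagonalizable (h : IsSmallBlockDiagonal I M) :
    IsSmallBlockDiagonalizable I M :=
  ⟨1, by simp, by simpa using h⟩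

theorem card_schurCompl_lt {s : ℕ} [NeZero s] (v : Fin s → ι) :
    Fintype.card ↥(Set.range v)ᶜ < Fintype.card ι :=
  Fintype.card_subtype_lt (x := v 0) (by simp)

namespace IsSmallBlockDiagonalizable

theorem transpose_mul_mul_iff {L : Matrix ι ι R} (hL : IsUnit L.det) :
    IsSmallBlockDiagonalizable I (Lᵀ * M * L) ↔ IsSmallBlockDiagonalizable I M := by
  constructor
  · rintro ⟨U, hU, h⟩
    refine ⟨L * U, by simpa [det_mul] using hL.mul hU, ?_⟩
    simpa [transpose_mul, Matrix.mul_assoc] using h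
  · rintro ⟨U, hU, h⟩
    refine ⟨L⁻¹ * U, by simpa [det_mul] using (isUnit_nonsing_inv_det L hL).mul hU, ?_⟩
    have hLL : L * L⁻¹ = 1 := mul_nonsing_inv L hL
    have hLLt : L⁻¹ᵀ * Lᵀ = 1 := by rw [← transpose_mul, hLL, transpose_one]
    rwa [show (L⁻¹ * U)ᵀ * (Lᵀ * M * L) * (L⁻¹ * U) = Uᵀ * (L⁻¹ᵀ * Lᵀ) * M * (L * L⁻¹) * U by
      simp only [transpose_mul, Matrix.mul_assoc], hLLt, hLL, Matrix.mul_one, Matrix.mul_one]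

theorem of_submatrix (f : κ ≃ ι) (h : IsSmallBlockDiagonalizable I (M.submatrix f f)) :
    IsSmallBlockDiagonalizable I M := by
  obtain ⟨U, hU, hUM⟩ := h
  refine ⟨U.submatrix f.symm f.symm, by rwa [det_submatrix_equiv_self], ?_⟩
  convert hUM.submatrix f.symm using 1
  rw [← submatrix_mul_equiv _ _ _ f.symm, ← submatrix_mul_equiv _ _ _ f.symm]
  simp

theorem fromBlocks {A : Matrix ι ι R} {D : Matrix κ κ R} (hA : IsSmallBlockDiagonalizable I A)
    (hD : IsSmallBlockDiagonalizable I D) : IsSmallBlockDiagonalizable I (fromBlocks A 0 0 D) := by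
  obtain ⟨U, hU, hUA⟩ := hA
  obtain ⟨V, hV, hVD⟩ := hD
  refine ⟨Matrix.fromBlocks U 0 0 V, by simpa [det_fromBlocks_zero₂₁] using hU.mul hV, ?_⟩
  simpa [fromBlocks_transpose, fromBlocks_multiply] using hUA.fromBlocks hVD

theorem smul (h : IsSmallBlockDiagonalizable I M) (c : R) :
    IsSmallBlockDiagonalizable I (c • M) := by
  obtain ⟨U, hU, hUM⟩ := h
  exact ⟨U, hU, by simpa using hUM.smul c⟩

theorem of_forall_mem (h : IsSmallBlockDiagonalizable I M) (hM : ∀ x y, M x y ∈ J) :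
    IsSmallBlockDiagonalizable J M := by
  obtain ⟨U, hU, hUM⟩ := h
  refine ⟨U, hU, hUM.of_forall_mem fun x y => ?_⟩
  simp only [mul_apply]
  exact J.sum_mem fun _ _ => J.mul_mem_right _ (J.sum_mem fun _ _ => J.mul_mem_left _ (hM _ _))

theorem fromBlocks_of_schur {A : Matrix ι ι R} (B : Matrix ι κ R) (D : Matrix κ κ R)
    (hA : A.IsSymm) (hAu : IsUnit A.det)
    (h : IsSmallBlockDiagonalizable I (Matrix.fromBlocks A 0 0 (D - Bᵀ * A⁻¹ * B))) :
    IsSmallBlockDiagonalizable I (Matrix.fromBlocks A B Bᵀ D) := by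
  let := invertibleOfIsUnitDet A hAu
  have hL : IsUnit (Matrix.fromBlocks 1 (A⁻¹ * B) 0 1 : Matrix (ι ⊕ κ) (ι ⊕ κ) R).det := by
    simp
  have hLt : (Matrix.fromBlocks 1 (A⁻¹ * B) 0 1 : Matrix (ι ⊕ κ) (ι ⊕ κ) R)ᵀ =
      Matrix.fromBlocks 1 0 (Bᵀ * A⁻¹) 1 := by
    simp [fromBlocks_transpose, transpose_nonsing_inv, hA.eq]
  rw [fromBlocks_eq_of_invertible₁₁, invOf_eq_nonsing_inv, ← hLt, transpose_mul_mul_iff hL]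
  exact h

theorem of_fromBlocks_schurCompl (hM : M.IsSymm) {s : ℕ} {v : Fin s → ι}
    (hv : Function.Injective v) (hA : IsUnit (M.submatrix v v).det)
    (h : IsSmallBlockDiagonalizable I (Matrix.fromBlocks (M.submatrix v v) 0 0 (M.schurCompl v))) :
    IsSmallBlockDiagonalizable I M := by
  let e := (Equiv.sumCongr (Equiv.ofInjective v hv) (Equiv.refl _)).trans
    (Equiv.Set.sumCompl (Set.range v))
  refine of_submatrix e ?_
  have : M.submatrix e e = Matrix.fromBlocks (M.submatrix v v) (M.submatrix v (↑))
      (M.submatrix v (↑))ᵀ (M.submatrix (↑) (↑)) := by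
    ext (a | x) (b | y) <;> simp [e, hM.apply]
  rw [this]
  exact fromBlocks_of_schur _ _ (hM.submatrix v) hA (by rwa [transpose_submatrix, hM.eq])

theorem of_schurCompl (hM : M.IsSymm) {s : ℕ} (hs : s = 1 ∨ s = 2) {v : Fin s → ι}
    (hv : Function.Injective v) (hA : IsUnit (M.submatrix v v).det)
    (hAI : s = 2 → ∀ a b, M (v a) (v b) ∈ I) (h : IsSmallBlockDiagonalizable I (M.schurCompl v)) :
    IsSmallBlockDiagonalizable I M :=
  of_fromBlocks_schurCompl hM hv hA <|
    (IsSmallBlockDiagonal.of_fin hs hAI).isSmallBlockDiagonalizable.fromBlocks h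

end IsSmallBlockDiagonalizable

section LocalRing

variable [IsLocalRing R]

theorem exists_isUnit_transpose_mul_mul_apply {x : ι → R} (hx : IsUnit (x ⬝ᵥ M *ᵥ x)) :
    ∃ U : Matrix ι ι R, IsUnit U.det ∧ ∃ i, IsUnit ((Uᵀ * M * U) i i) := by
  obtain ⟨i, hi⟩ : ∃ i, IsUnit (x i) := by
    by_contra! h
    have : x ⬝ᵥ M *ᵥ x ∈ IsLocalRing.maximalIdeal R :=
      Ideal.sum_mem _ fun k _ => Ideal.mul_mem_right _ _ ((IsLocalRing.mem_maximalIdeal _).mpr (h k))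
    exact (IsLocalRing.mem_maximalIdeal _).mp this hx
  refine ⟨(1 : Matrix ι ι R).updateCol i x, ?_, i, ?_⟩
  · rwa [← cramer_apply, cramer_one]
  · have hcol : ((1 : Matrix ι ι R).updateCol i x)ᵀ i = x := by ext; simp
    simpa [mul_mul_apply, hcol] using hx

theorem exists_congr_isUnit_schurCompl_apply {a : Matrix (Fin 1) (Fin 1) R}
    (ha : IsUnit (a 0 0)) {S : Matrix κ κ R} (hS : S.IsSymm) (hdiag : ∀ l, ¬IsUnit (S l l))
    {j l : κ} (hjl : IsUnit (S j l)) :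
    ∃ (L : Matrix (Fin 1 ⊕ κ) (Fin 1 ⊕ κ) R) (k : Fin 1 ⊕ κ), IsUnit L.det ∧
      IsUnit ((Lᵀ * Matrix.fromBlocks a 0 0 S * L) k k) ∧
      ∃ y, IsUnit ((Lᵀ * Matrix.fromBlocks a 0 0 S * L).schurCompl (fun _ : Fin 1 => k) y y) := by
  have hne : j ≠ l := by rintro rfl; exact hdiag j hjl
  -- `T` replaces the basis vector `e j` by `e j + e₀`.
  let T : Matrix (Fin 1 ⊕ κ) (Fin 1 ⊕ κ) R := transvection (.inl 0) (.inr j) 1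
  have hT : Tᵀ = transvection (.inr j) (.inl 0) 1 := by
    simp [T, transvection, transpose_single]
  set N := Tᵀ * Matrix.fromBlocks a 0 0 S * T with hN
  have hjj : N (.inr j) (.inr j) = S j j + a 0 0 := by
    simp [hN, hT, T, Matrix.mul_assoc, transvection_mul_apply_same, mul_transvection_apply_same]
  have hjl' : N (.inr j) (.inr l) = S j l := by
    simp [hN, hT, T, Matrix.mul_assoc, transvection_mul_apply_same, mul_transvection_apply_of_ne,
      hne.symm]
  have hlj : N (.inr l) (.inr j) = S l j := by
    simp [hN, hT, T, Matrix.mul_assoc, transvection_mul_apply_of_ne, mul_transvection_apply_same,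
      hne.symm]
  have hll : N (.inr l) (.inr l) = S l l := by
    simp [hN, hT, T, Matrix.mul_assoc, transvection_mul_apply_of_ne, mul_transvection_apply_of_ne,
      hne.symm]
  have hpivot : IsUnit (S j j + a 0 0) :=
    IsLocalRing.isUnit_add_of_not_isUnit_of_isUnit (hdiag j) ha
  refine ⟨T, .inr j, by simp [T, det_transvection_of_ne], by rwa [← hN, hjj],
    ⟨.inr l, by simp [hne.symm]⟩, ?_⟩
  rw [← hN, schurCompl_apply_of_fin_one]
  simp only [hll, hlj, hjl', hjj, sub_eq_add_neg, hS.apply]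
  exact IsLocalRing.isUnit_add_of_not_isUnit_of_isUnit (hdiag l)
    ((hjl.mul hpivot.ringInverse).mul hjl).neg

end LocalRing

section ValuationRing

variable [IsDomain R] [ValuationRing R]

theorem IsSymm.isSmallBlockDiagonalizable_top (hM : M.IsSymm) :
    IsSmallBlockDiagonalizable ⊤ M := by
  induction h : Fintype.card ι using Nat.strong_induction_on generalizing ι with
  | _ n ih =>
  by_cases h0 : M = 0
  · rw [h0, ← diagonal_zero]
    exact (IsSmallBlockDiagonal.of_diagonal ⊤ 0).isSmallBlockDiagonalizable
  obtain ⟨g, H, rfl, hH, i, j, hij⟩ := hM.exists_eq_smul h0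
  obtain ⟨s, v, hs, hv, hA⟩ := hH.exists_isUnit_det_submatrix (hij ▸ isUnit_one)
  have : NeZero s := ⟨by omega⟩
  refine (IsSmallBlockDiagonalizable.of_schurCompl hH hs hv hA
    (fun _ _ _ => Submodule.mem_top) ?_).smul g
  exact ih _ (h ▸ card_schurCompl_lt v) (hH.schurCompl v) rfl

theorem IsSymm.isSmallBlockDiagonalizable_maximalIdeal_of_isUnit_apply (hM : M.IsSymm) {i : ι}
    (hi : IsUnit (M i i)) : IsSmallBlockDiagonalizable (IsLocalRing.maximalIdeal R) M := by
  induction h : Fintype.card ι using Nat.strong_induction_on generalizing ι with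
  | _ n ih =>
  let v : Fin 1 → ι := fun _ => i
  have hv : Function.Injective v := Function.injective_of_subsingleton _
  have hA : IsUnit (M.submatrix v v).det := by simpa [v] using hi
  have hS : (M.schurCompl v).IsSymm := hM.schurCompl v
  have hcard : Fintype.card ↥(Set.range v)ᶜ < n := h ▸ card_schurCompl_lt v
  by_cases hdiag : ∃ l, IsUnit (M.schurCompl v l l)
  · obtain ⟨l, hl⟩ := hdiag
    exact IsSmallBlockDiagonalizable.of_schurCompl hM (Or.inl rfl) hv hA (by omega)
      (ih _ hcard hS hl rfl)
  by_cases hm : ∀ x y, M.schurCompl v x y ∈ IsLocalRing.maximalIdeal R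
  · exact IsSmallBlockDiagonalizable.of_schurCompl hM (Or.inl rfl) hv hA (by omega)
      (hS.isSmallBlockDiagonalizable_top.of_forall_mem hm)
  push Not at hdiag hm
  obtain ⟨j, l, hjl⟩ := hm
  obtain ⟨L, k, hL, hk, y, hy⟩ := exists_congr_isUnit_schurCompl_apply (a := M.submatrix v v)
    (by simpa [v] using hi) hS hdiag (j := j) (l := l)
    (by simpa [IsLocalRing.mem_maximalIdeal, mem_nonunits_iff] using hjl)
  refine IsSmallBlockDiagonalizable.of_fromBlocks_schurCompl hM hv hA ?_
  rw [← IsSmallBlockDiagonalizable.transpose_mul_mul_iff hL]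
  have hN := ((hM.submatrix v).fromBlocks transpose_zero hS).transpose_mul_mul L
  have := card_schurCompl_lt (fun _ : Fin 1 => k)
  simp only [Fintype.card_sum, Fintype.card_fin] at this
  exact IsSmallBlockDiagonalizable.of_schurCompl hN (Or.inl rfl)
    (Function.injective_of_subsingleton _) (by simpa using hk) (by omega)
    (ih _ (by omega) (hN.schurCompl _) hy rfl)

theorem IsSymm.isSmallBlockDiagonalizable_maximalIdeal (hM : M.IsSymm) {x : ι → R}
    (hx : IsUnit (x ⬝ᵥ M *ᵥ x)) : IsSmallBlockDiagonalizable (IsLocalRing.maximalIdeal R) M := by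
  obtain ⟨U, hU, i, hi⟩ := exists_isUnit_transpose_mul_mul_apply hx
  rw [← IsSmallBlockDiagonalizable.transpose_mul_mul_iff hU]
  exact (hM.transpose_mul_mul U).isSmallBlockDiagonalizable_maximalIdeal_of_isUnit_apply hi

end ValuationRing

end Congruence

end Matrix

theorem padic_symmetric_matrix_block_diagonalization
    {n : ℕ} (G : Matrix (Fin n) (Fin n) ℤ_[2]) (hG : G.IsSymm) :
    (∃ U : Matrix (Fin n) (Fin n) ℤ_[2], IsUnit U.det ∧
      ∃ (k : ℕ) (sz : Fin k → ℕ) (_ : ∀ i, sz i = 1 ∨ sz i = 2)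
        (B : ∀ i, Matrix (Fin (sz i)) (Fin (sz i)) ℤ_[2])
        (e : Fin n ≃ ((i : Fin k) × Fin (sz i))),
        Uᵀ * G * U = (Matrix.blockDiagonal' B).submatrix e e) ∧
    ((∃ x : Fin n → ℤ_[2], IsUnit (x ⬝ᵥ G.mulVec x)) →
      ∃ U : Matrix (Fin n) (Fin n) ℤ_[2], IsUnit U.det ∧
      ∃ (k : ℕ) (sz : Fin k → ℕ) (_ : ∀ i, sz i = 1 ∨ sz i = 2)
        (B : ∀ i, Matrix (Fin (sz i)) (Fin (sz i)) ℤ_[2])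
        (e : Fin n ≃ ((i : Fin k) × Fin (sz i))),
        Uᵀ * G * U = (Matrix.blockDiagonal' B).submatrix e e ∧
          ∀ i, sz i = 2 → ∀ j l, (2 : ℤ_[2]) ∣ B i j l) := by
  refine ⟨?_, fun ⟨x, hx⟩ => ?_⟩
  · obtain ⟨U, hU, hUG⟩ := hG.isSmallBlockDiagonalizable_top
    obtain ⟨k, sz, hsz, B, e, h, -⟩ := hUG.exists_fin
    exact ⟨U, hU, k, sz, hsz, B, e, h⟩
  · obtain ⟨U, hU, hUG⟩ := hG.isSmallBlockDiagonalizable_maximalIdeal hx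
    obtain ⟨k, sz, hsz, B, e, h, hB⟩ := hUG.exists_fin
    refine ⟨U, hU, k, sz, hsz, B, e, h, fun i hi a b => ?_⟩
    simpa [PadicInt.maximalIdeal_eq_span_p, Ideal.mem_span_singleton] using hB i hi a b
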